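/- arXiv:1103.1980 — 2 statements merged into one kernel-verified Lean document; each statement's English description precedes it below -/
import Mathlib

section
/- Let p⁰,...,pⁿ be points of the standard n-simplex and ψ a map from the simplex to itself such that: (a) p^i_i > ψ_i(p^i) for each i; (b) |p^i_j − p^0_j| < δ for all i,j; (c) |ψ_j(p^i) − ψ_j(p^0)| < ε/(2n(n+1)) for all i,j, where δ < ε/(2n(n+1)). Then |p^0_i − ψ_i(p^0)| < ε/(n+1) for every coordinate i, and hence max_i |p^0_i − ψ_i(p^0)| < ε. -/
/-! With `c = ε / (2n(n+1))`, the label `ψ_i(pⁱ) < pⁱ_i` moves to `p⁰` at a cost of `δ < c` on the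
point and `c` on its image, so every `d_i = p⁰_i - ψ_i(p⁰)` exceeds `-2c`. Both points lie in the
simplex, so the `d_i` sum to zero, and each one is minus the sum of the `n` others, hence below
`2nc = ε / (n + 1)`. -/

open Finset

theorem lt_card_sub_one_mul_of_sum_eq_zero {ι : Type*} [Fintype ι] {d : ι → ℝ} {a : ℝ}
    (hι : 1 < Fintype.card ι) (hsum : ∑ j, d j = 0) (hlt : ∀ j, -a < d j) (i : ι) :
    d i < ((Fintype.card ι : ℝ) - 1) * a := by
  classical
  have hcard : #(univ.erase i) = Fintype.card ι - 1 := card_erase_of_mem (mem_univ i)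
  have hne : (univ.erase i).Nonempty := by rw [← card_pos, hcard]; omega
  have hrest : ∑ _j ∈ univ.erase i, -a < ∑ j ∈ univ.erase i, d j :=
    sum_lt_sum_of_nonempty hne fun j _ => hlt j
  have hsplit : d i + ∑ j ∈ univ.erase i, d j = 0 := by rw [add_sum_erase _ _ (mem_univ i), hsum]
  rw [sum_const, hcard, nsmul_eq_mul, Nat.cast_sub hι.le, Nat.cast_one] at hrest
  linarith

theorem sum_sub_eq_zero_of_mem_stdSimplex {ι : Type*} [Fintype ι] {x y : ι → ℝ}
    (hx : x ∈ stdSimplex ℝ ι) (hy : y ∈ stdSimplex ℝ ι) : ∑ i, (x i - y i) = 0 := by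
  rw [sum_sub_distrib, hx.2, hy.2, sub_self]

theorem fully_labeled_simplex_approx_fixed_point_general {n : ℕ} (hn : 1 ≤ n)
    (ε δ : ℝ) (hε : 0 < ε)
    (hδε : δ < ε / (2 * n * (n + 1)))
    (p : Fin (n + 1) → (Fin (n + 1) → ℝ))
    (hp : ∀ i, p i ∈ stdSimplex ℝ (Fin (n + 1)))
    (ψ : (Fin (n + 1) → ℝ) → (Fin (n + 1) → ℝ))
    (hψ : ∀ x ∈ stdSimplex ℝ (Fin (n + 1)), ψ x ∈ stdSimplex ℝ (Fin (n + 1)))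
    (ha : ∀ i, ψ (p i) i < p i i)
    (hb : ∀ i j, |p i j - p 0 j| < δ)
    (hc : ∀ i j, |ψ (p i) j - ψ (p 0) j| < ε / (2 * n * (n + 1))) :
    (∀ i, |p 0 i - ψ (p 0) i| < ε / (n + 1)) ∧
    (∀ i, |p 0 i - ψ (p 0) i| < ε) := by
  set c := ε / (2 * n * (n + 1))
  have hn' : (1 : ℝ) ≤ n := by exact_mod_cast hn
  have hcpos : 0 < c := by positivity
  have h2cn : n * (2 * c) = ε / (n + 1) := by simp only [c]; field_simp
  have hlower : ∀ i, -(2 * c) < p 0 i - ψ (p 0) i := fun i => by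
    linarith [ha i, (abs_lt.mp (hb i i)).2, (abs_lt.mp (hc i i)).1]
  have hupper : ∀ i, p 0 i - ψ (p 0) i < n * (2 * c) := fun i => by
    simpa using lt_card_sub_one_mul_of_sum_eq_zero (by rw [Fintype.card_fin]; omega)
      (sum_sub_eq_zero_of_mem_stdSimplex (hp 0) (hψ _ (hp 0))) hlower i
  have hbound : ∀ i, |p 0 i - ψ (p 0) i| < ε / (n + 1) := fun i =>
    abs_lt.mpr ⟨by nlinarith [hlower i], h2cn ▸ hupper i⟩
  refine ⟨hbound, fun i => (hbound i).trans_le ?_⟩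
  exact div_le_self hε.le (by linarith)

theorem fully_labeled_simplex_approx_fixed_point {n : ℕ} (hn : 1 ≤ n)
    (ε δ : ℝ) (hε : 0 < ε) (hδ : 0 < δ)
    (hδε : δ < ε / (2 * n * (n + 1)))
    (p : Fin (n + 1) → (Fin (n + 1) → ℝ))
    (hp : ∀ i, p i ∈ stdSimplex ℝ (Fin (n + 1)))
    (ψ : (Fin (n + 1) → ℝ) → (Fin (n + 1) → ℝ))
    (hψ : ∀ x ∈ stdSimplex ℝ (Fin (n + 1)), ψ x ∈ stdSimplex ℝ (Fin (n + 1)))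
    (ha : ∀ i, ψ (p i) i < p i i)
    (hb : ∀ i j, |p i j - p 0 j| < δ)
    (hc : ∀ i j, |ψ (p i) j - ψ (p 0) j| < ε / (2 * n * (n + 1))) :
    (∀ i, |p 0 i - ψ (p 0) i| < ε / (n + 1)) ∧
    (∀ i, |p 0 i - ψ (p 0) i| < ε) :=
  fully_labeled_simplex_approx_fixed_point_general hn ε δ hε hδε p hp ψ hψ ha hb hc
end

section
/- A mixed-strategy profile p̃ is a fixed point of the Nash map ψ if and only if max(π_i(s_ij, p̃_{−i}) − π_i(p̃), 0) = 0 for every player i and every pure strategy s_ij, i.e., p̃ is a Nash equilibrium. In particular, if ψ(p̃) = p̃ then no player has a pure strategy yielding a payoff strictly greater than π_i(p̃). -/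
/-!
Write `g k = max (u k - π) 0` for the gains of one player and `S = ∑ k, g k`. Since `1 + S > 0`,
the Nash map fixes `p` exactly when `g k = S * p k` for all `k`. Weighting the deviations
`u k - π` with these gains gives `∑ k, g k * (u k - π) = S * ∑ k, p k * (u k - π) = 0`, because
`π` is the `p`-average of `u`. But `g k * (u k - π) = g k ^ 2`, so all gains vanish.
-/

open Finset

lemma max_zero_mul_self {α : Type*} [MulZeroClass α] [LinearOrder α] (a : α) :
    max a 0 * a = max a 0 * max a 0 := by
  rcases le_total a 0 with h | h
  · simp [max_eq_right h]
  · rw [max_eq_left h]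

variable {ι : Type*} [Fintype ι]

lemma max_zero_eq_zero_of_sum_max_zero_mul_eq_zero {R : Type*} [Ring R] [LinearOrder R]
    [IsStrictOrderedRing R] {a : ι → R} (h : ∑ k, max (a k) 0 * a k = 0) (j : ι) :
    max (a j) 0 = 0 := by
  simp only [max_zero_mul_self] at h
  exact mul_self_eq_zero.mp <|
    (sum_eq_zero_iff_of_nonneg fun k _ => mul_self_nonneg _).mp h j (mem_univ j)

lemma sum_mul_sub_weighted_sum_eq_zero {R : Type*} [CommRing R] (p u : ι → R)
    (hp : ∑ k, p k = 1) : ∑ k, p k * (u k - ∑ l, p l * u l) = 0 := by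
  simp only [mul_sub, sum_sub_distrib, ← sum_mul, hp, one_mul, sub_self]

lemma nashMap_player_fixed_iff {R : Type*} [Field R] [LinearOrder R] [IsStrictOrderedRing R]
    (p u : ι → R) (hp : ∑ k, p k = 1) (π : R)
    (hπ : π = ∑ k, p k * u k) :
    (∀ j, (p j + max (u j - π) 0) / (1 + ∑ k, max (u k - π) 0) = p j) ↔
      ∀ j, max (u j - π) 0 = 0 := by
  set g : ι → R := fun k => max (u k - π) 0
  set S := ∑ k, g k
  have hS : 0 < 1 + S := by
    have : 0 ≤ S := sum_nonneg fun k _ => le_max_right _ _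
    linarith
  refine ⟨fun hfix => ?_, fun hg j => by simp [S, g, hg]⟩
  have hgain : ∀ k, g k = S * p k := fun k => by
    have := (div_eq_iff hS.ne').mp (hfix k)
    linarith
  have hweighted : ∑ k, g k * (u k - π) = 0 := by
    simp only [hgain, mul_assoc, ← mul_sum, hπ, sum_mul_sub_weighted_sum_eq_zero p u hp, mul_zero]
  exact max_zero_eq_zero_of_sum_max_zero_mul_eq_zero hweighted

/-- A mixed-strategy profile `p` is a fixed point of the Nash map `ψ` iff
`max (π_i(s_ij, p_{-i}) - π_i(p)) 0 = 0` for every player `i` and pure strategy `j`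
(i.e. `p` is a Nash equilibrium); in particular a fixed point gives no player a
pure strategy with payoff exceeding the expected payoff. Here `u i j = π_i(s_ij, p_{-i})`
and `π i = π_i(p) = ∑ j, p i j * u i j`. -/
theorem nash_map_fixed_point_iff_equilibrium {n m : ℕ}
    (p : Fin n → Fin m → ℝ) (hp : ∀ i, p i ∈ stdSimplex ℝ (Fin m))
    (u : Fin n → Fin m → ℝ)
    (π : Fin n → ℝ) (hπ : ∀ i, π i = ∑ j, p i j * u i j)
    (ψ : Fin n → Fin m → ℝ)
    (hψ : ∀ i j, ψ i j =
      (p i j + max (u i j - π i) 0) / (1 + ∑ k, max (u i k - π i) 0)) :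
    ((∀ i j, ψ i j = p i j) ↔ (∀ i j, max (u i j - π i) 0 = 0)) ∧
    ((∀ i j, ψ i j = p i j) → ∀ i j, u i j ≤ π i) := by
  have hfixed : (∀ i j, ψ i j = p i j) ↔ ∀ i j, max (u i j - π i) 0 = 0 := by
    simp only [hψ]
    exact forall_congr' fun i => nashMap_player_fixed_iff (p i) (u i) (hp i).2 (π i) (hπ i)
  exact ⟨hfixed, fun hfix i j => sub_nonpos.mp (max_eq_right_iff.mp (hfixed.mp hfix i j))⟩
end
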